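/- arXiv:2505.00760 — 5 statements merged into one kernel-verified Lean document; each statement's English description precedes it below -/
import Mathlib

section
/- If κ ∈ K_k (with 1 ≤ k ≤ n) and the entries are ordered κ_1 ≥ κ_2 ≥ ⋯ ≥ κ_n, then κ_1 > 0; more generally, κ_1 ≥ κ_2 ≥ ⋯ ≥ κ_k > 0. -/
/-!
Write `e_j(s)` for the elementary symmetric functions of a multiset `s` in a linearly ordered
ring. From `e_{j+1}(a :: s) = e_{j+1}(s) + a e_j(s)` one sees that deleting a nonpositive
element `a` keeps `e_0, …, e_k` positive: inductively `e_{j+1}(s) ≥ e_{j+1}(a :: s) > 0`.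
Deleting all nonpositive elements thus leaves the positive ones with `e_k > 0`, so there are
at least `k` of them. For a decreasingly ordered `κ` the positive entries form an initial
segment, which therefore contains the first `k`.
-/

open Finset

def esymmS (n k : ℕ) (κ : Fin n → ℝ) : ℝ :=
  ∑ s ∈ Finset.powersetCard k (Finset.univ : Finset (Fin n)), ∏ i ∈ s, κ i

/-- The `k`-th Gårding cone, via the (unnormalized) elementary symmetric polynomials. -/
def GardingCone (n k : ℕ) : Set (Fin n → ℝ) :=
  {κ | ∀ j : ℕ, 1 ≤ j → j ≤ k → 0 < esymmS n j κ}

namespace Multiset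

variable {R : Type*}

@[simp]
theorem esymm_zero [CommSemiring R] (s : Multiset R) : s.esymm 0 = 1 := by
  simp [esymm, powersetCard_zero_left]

theorem esymm_cons_succ [CommSemiring R] (a : R) (s : Multiset R) (j : ℕ) :
    (a ::ₘ s).esymm (j + 1) = s.esymm (j + 1) + a * s.esymm j := by
  simp [esymm, powersetCard_cons, map_map, sum_map_mul_left]

theorem esymm_eq_zero_of_card_lt [CommSemiring R] {s : Multiset R} {j : ℕ} (h : card s < j) :
    s.esymm j = 0 := by
  simp [esymm, powersetCard_eq_empty _ h]

theorem le_card_of_esymm_pos [CommSemiring R] [Preorder R] {s : Multiset R} {k : ℕ}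
    (hpos : ∀ j ≤ k, 0 < s.esymm j) : k ≤ card s := by
  by_contra! hlt
  simpa [esymm_eq_zero_of_card_lt hlt] using hpos k le_rfl

section Ordered

variable [CommRing R] [LinearOrder R] [IsStrictOrderedRing R] {k : ℕ}

theorem esymm_pos_of_cons_of_nonpos {a : R} {s : Multiset R} (ha : a ≤ 0)
    (hpos : ∀ j ≤ k, 0 < (a ::ₘ s).esymm j) : ∀ j ≤ k, 0 < s.esymm j := by
  intro j hj
  induction j with
  | zero => simp
  | succ j ih =>
    have hcons := esymm_cons_succ a s j
    have hterm : a * s.esymm j ≤ 0 := mul_nonpos_of_nonpos_of_nonneg ha (ih (by omega)).le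
    linarith [hpos (j + 1) hj]

theorem esymm_pos_of_add_of_nonpos {t : Multiset R} (ht : ∀ x ∈ t, x ≤ 0) {u : Multiset R}
    (hpos : ∀ j ≤ k, 0 < (t + u).esymm j) : ∀ j ≤ k, 0 < u.esymm j := by
  induction t using Multiset.induction_on with
  | empty => simpa using hpos
  | cons a t ih =>
    rw [cons_add] at hpos
    exact ih (fun x hx => ht x (mem_cons_of_mem hx))
      (esymm_pos_of_cons_of_nonpos (ht a (mem_cons_self a t)) hpos)

theorem le_card_filter_pos_of_esymm_pos {s : Multiset R} (hpos : ∀ j ≤ k, 0 < s.esymm j) :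
    k ≤ card (s.filter (0 < ·)) := by
  rw [← filter_add_not (0 < ·) s, add_comm] at hpos
  exact le_card_of_esymm_pos <|
    esymm_pos_of_add_of_nonpos (fun x hx => not_lt.1 (mem_filter.1 hx).2) hpos

end Ordered

end Multiset

theorem esymmS_eq_esymm (n j : ℕ) (κ : Fin n → ℝ) :
    esymmS n j κ = (univ.val.map κ).esymm j :=
  (Finset.esymm_map_val κ univ j).symm

theorem le_card_pos_of_mem_gardingCone {n k : ℕ} {κ : Fin n → ℝ} (hκ : κ ∈ GardingCone n k) :
    k ≤ #{i | 0 < κ i} := by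
  have hpos : ∀ j ≤ k, 0 < (univ.val.map κ).esymm j := by
    rintro (_ | j) hj
    · simp
    · rw [← esymmS_eq_esymm]
      exact hκ _ (by omega) hj
  have hcount := Multiset.le_card_filter_pos_of_esymm_pos hpos
  rwa [Multiset.filter_map, Multiset.card_map, ← Finset.filter_val] at hcount

theorem gardingCone_first_entries_pos_general (n k : ℕ)
    (κ : Fin n → ℝ) (hκ : κ ∈ GardingCone n k)
    (hord : ∀ i j : Fin n, i ≤ j → κ j ≤ κ i) :
    ∀ i : Fin n, (i : ℕ) < k → 0 < κ i := by
  intro i hi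
  by_contra! hκi
  have hsub : ({j | 0 < κ j} : Finset (Fin n)) ⊆ Iio i := by
    intro j hj
    simp only [mem_filter, mem_univ, true_and] at hj
    exact mem_Iio.2 (lt_of_not_ge fun hij => ((hord i j hij).trans hκi).not_gt hj)
  have hfew := (card_le_card hsub).trans_eq (Fin.card_Iio i)
  have hmany := le_card_pos_of_mem_gardingCone hκ
  omega

/-- If `κ ∈ K_k` is ordered decreasingly, then its first `k` entries are positive. -/
theorem gardingCone_first_entries_pos (n k : ℕ) (hk1 : 1 ≤ k) (hkn : k ≤ n)
    (κ : Fin n → ℝ) (hκ : κ ∈ GardingCone n k)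
    (hord : ∀ i j : Fin n, i ≤ j → κ j ≤ κ i) :
    ∀ i : Fin n, (i : ℕ) < k → 0 < κ i :=
  gardingCone_first_entries_pos_general n k κ hκ hord
end

section
/- For 1 ≤ k ≤ n and κ ∈ K_k, the first derivatives of S_k are positive: S_{k-1}(κ|i) > 0 for every index i. -/
/-!
Induction on `k`, over all finite index sets at once; write `S_j(v|i)` for `S_j` with the entry
`vᵢ` removed. Shifting every entry by `t ≥ 0` keeps `v` in the cone. If `S_k(v|i) ≤ 0` for some
`v` with `S_1, …, S_{k+1} > 0`, shift until `S_k(·|i)` vanishes, at `w`. By the induction hypothesis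
`w|i` lies in the closure of the cone of order `k`, so `S_{k-1}(w|i,a) ≥ 0` for all `a ≠ i`.
Newton's identity `(k+1) S_{k+1} = ∑ₐ wₐ S_k(·|a)` on the entries other than `i`, together with
`S_k(w|i) = 0`, then gives `S_{k+1}(w) = S_{k+1}(w|i) = -∑ₐ wₐ² S_{k-1}(w|i,a) / (k+1) ≤ 0`.
-/

open Finset

section Algebra

variable {ι R : Type*}

-- The paper's `S_j(κ|i)` is `esymmOn (univ.erase i) j κ`, by `esymmOn_update_zero`.
def esymmOn [CommSemiring R] (S : Finset ι) (j : ℕ) (v : ι → R) : R :=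
  ∑ A ∈ S.powersetCard j, ∏ a ∈ A, v a

variable [CommSemiring R] {S : Finset ι} {v w : ι → R}

@[simp]
theorem esymmOn_zero (S : Finset ι) (v : ι → R) : esymmOn S 0 v = 1 := by
  simp [esymmOn]

theorem esymmOn_congr {j : ℕ} (h : ∀ a ∈ S, v a = w a) : esymmOn S j v = esymmOn S j w :=
  sum_congr rfl fun _ hA => prod_congr rfl fun a ha => h a (mem_powersetCard.1 hA |>.1 ha)

theorem card_le_of_esymmOn_ne_zero {j : ℕ} (h : esymmOn S j v ≠ 0) : j ≤ S.card := by
  by_contra! hlt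
  simp [esymmOn, powersetCard_eq_empty.2 hlt] at h

variable [DecidableEq ι]

theorem esymmOn_succ_of_mem {i : ι} (hi : i ∈ S) (j : ℕ) (v : ι → R) :
    esymmOn S (j + 1) v = v i * esymmOn (S.erase i) j v + esymmOn (S.erase i) (j + 1) v := by
  have hi' : i ∉ S.erase i := notMem_erase i S
  have hnot : ∀ A ∈ (S.erase i).powersetCard j, i ∉ A := fun A hA h =>
    hi' ((mem_powersetCard.1 hA).1 h)
  conv_lhs => rw [esymmOn, ← insert_erase hi, powersetCard_succ_insert hi']
  rw [sum_union, sum_image, add_comm, esymmOn, esymmOn, mul_sum]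
  · congr 1
    exact sum_congr rfl fun A hA => prod_insert (hnot A hA)
  · intro A hA B hB hAB
    simpa [erase_insert (hnot A hA), erase_insert (hnot B hB)] using congrArg (erase · i) hAB
  · refine disjoint_right.2 fun A hA hA' => ?_
    obtain ⟨B, -, rfl⟩ := mem_image.1 hA
    exact hi' ((mem_powersetCard.1 hA').1 (mem_insert_self i B))

theorem esymmOn_update_zero {i : ι} (hi : i ∈ S) (j : ℕ) (v : ι → R) :
    esymmOn S j (Function.update v i 0) = esymmOn (S.erase i) j v := by
  have hcongr : ∀ m, esymmOn (S.erase i) m (Function.update v i 0) = esymmOn (S.erase i) m v :=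
    fun m => esymmOn_congr fun a ha => Function.update_of_ne (ne_of_mem_erase ha) 0 v
  cases j with
  | zero => simp
  | succ j => rw [esymmOn_succ_of_mem hi, Function.update_self, zero_mul, zero_add, hcongr]

theorem sum_powersetCard_succ_sum_erase {M : Type*} [AddCommMonoid M] (S : Finset ι) (j : ℕ)
    (G : ι → Finset ι → M) :
    ∑ B ∈ S.powersetCard (j + 1), ∑ a ∈ B, G a (B.erase a) =
      ∑ A ∈ S.powersetCard j, ∑ a ∈ S \ A, G a A := by
  rw [sum_sigma', sum_sigma']
  refine sum_bij' (fun p _ => ⟨p.1.erase p.2, p.2⟩) (fun p _ => ⟨insert p.2 p.1, p.2⟩)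
    ?_ ?_ ?_ ?_ fun _ _ => rfl
  · rintro ⟨B, a⟩ hp
    simp only [mem_sigma, mem_powersetCard] at hp ⊢
    obtain ⟨⟨hBS, hBc⟩, ha⟩ := hp
    exact ⟨⟨(erase_subset _ _).trans hBS, by rw [card_erase_of_mem ha, hBc]; rfl⟩,
      mem_sdiff.2 ⟨hBS ha, notMem_erase _ _⟩⟩
  · rintro ⟨A, a⟩ hp
    simp only [mem_sigma, mem_powersetCard, mem_sdiff] at hp ⊢
    obtain ⟨⟨hAS, hAc⟩, haS, haA⟩ := hp
    exact ⟨⟨insert_subset haS hAS, by rw [card_insert_of_notMem haA, hAc]⟩, mem_insert_self _ _⟩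
  · rintro ⟨B, a⟩ hp
    simp only [insert_erase (mem_sigma.1 hp).2]
  · rintro ⟨A, a⟩ hp
    simp only [erase_insert (mem_sdiff.1 (mem_sigma.1 hp).2).2]

theorem succ_nsmul_esymmOn (S : Finset ι) (j : ℕ) (v : ι → R) :
    (j + 1) • esymmOn S (j + 1) v = ∑ a ∈ S, v a * esymmOn (S.erase a) j v := by
  have hL : (j + 1) • esymmOn S (j + 1) v =
      ∑ B ∈ S.powersetCard (j + 1), ∑ a ∈ B, v a * ∏ x ∈ B.erase a, v x := by
    rw [esymmOn, smul_sum]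
    refine sum_congr rfl fun B hB => ?_
    rw [sum_congr rfl fun a ha => mul_prod_erase B v ha, sum_const, (mem_powersetCard.1 hB).2]
  have hR : ∑ a ∈ S, v a * esymmOn (S.erase a) j v =
      ∑ A ∈ S.powersetCard j, ∑ a ∈ S \ A, v a * ∏ x ∈ A, v x := by
    simp only [esymmOn, mul_sum]
    refine sum_comm' fun a A => ?_
    rw [mem_powersetCard, mem_powersetCard, mem_sdiff, subset_erase]
    tauto
  rw [hL, hR, sum_powersetCard_succ_sum_erase S j fun a A => v a * ∏ x ∈ A, v x]

end Algebra

section Order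

variable {ι R : Type*} [CommRing R] [LinearOrder R] [IsStrictOrderedRing R]
  {S : Finset ι} {v : ι → R}

theorem esymmOn_pos {j : ℕ} (hj : j ≤ S.card) (hv : ∀ a ∈ S, 0 < v a) : 0 < esymmOn S j v :=
  sum_pos (fun _ hA => prod_pos fun a ha => hv a ((mem_powersetCard.1 hA).1 ha))
    (powersetCard_nonempty.2 hj)

variable [DecidableEq ι]

theorem esymmOn_add_two_nonpos {m : ℕ} (h0 : esymmOn S (m + 1) v = 0)
    (hnn : ∀ a ∈ S, 0 ≤ esymmOn (S.erase a) m v) : esymmOn S (m + 2) v ≤ 0 := by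
  have hsplit : ∀ a ∈ S, esymmOn (S.erase a) (m + 1) v = -(v a * esymmOn (S.erase a) m v) :=
    fun a ha => eq_neg_of_add_eq_zero_right ((esymmOn_succ_of_mem ha m v).symm.trans h0)
  have hsum : (m + 2) • esymmOn S (m + 2) v = -∑ a ∈ S, v a ^ 2 * esymmOn (S.erase a) m v := by
    rw [succ_nsmul_esymmOn, sum_congr rfl fun a ha => by rw [hsplit a ha], ← sum_neg_distrib]
    exact sum_congr rfl fun a _ => by ring
  have : (m + 2) • esymmOn S (m + 2) v ≤ 0 := by
    rw [hsum, neg_nonpos]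
    exact sum_nonneg fun a ha => mul_nonneg (sq_nonneg _) (hnn a ha)
  exact (nsmul_nonpos_iff (by omega)).1 this

end Order

section Cone

variable {ι : Type*} {S : Finset ι} {v : ι → ℝ} {j k : ℕ}

def gardingConeOn (S : Finset ι) (k : ℕ) : Set (ι → ℝ) :=
  {v | ∀ j, 1 ≤ j → j ≤ k → 0 < esymmOn S j v}

theorem gardingConeOn_mono {l : ℕ} (hkl : k ≤ l) : gardingConeOn S l ⊆ gardingConeOn S k :=
  fun _ hv j hj hjk => hv j hj (hjk.trans hkl)

theorem esymmOn_nonneg_of_mem_gardingConeOn (hv : v ∈ gardingConeOn S k) (hj : j ≤ k) :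
    0 ≤ esymmOn S j v := by
  rcases j with _ | j
  · simp
  · exact (hv (j + 1) (by omega) hj).le

theorem continuous_esymmOn_add_const (S : Finset ι) (j : ℕ) (v : ι → ℝ) :
    Continuous fun t : ℝ => esymmOn S j fun a => v a + t :=
  continuous_finsetSum _ fun _ _ => continuous_finsetProd _ fun _ _ => by fun_prop

theorem esymmOn_nonneg_of_add_const_pos (h : ∀ ε > 0, 0 < esymmOn S j fun a => v a + ε) :
    0 ≤ esymmOn S j v := by
  have hlim := ((continuous_esymmOn_add_const S j v).tendsto 0).mono_left
    (nhdsWithin_le_nhds (s := Set.Ioi 0))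
  simp only [add_zero] at hlim
  exact ge_of_tendsto hlim (eventually_nhdsWithin_of_forall fun ε hε => (h ε hε).le)

theorem exists_esymmOn_add_const_eq_zero {m : ℕ} (hm : m ≤ S.card) (hv : esymmOn S m v ≤ 0) :
    ∃ t, 0 ≤ t ∧ (esymmOn S m fun a => v a + t) = 0 := by
  set T := 1 + ∑ a ∈ S, |v a|
  have hT : 0 ≤ T := by positivity
  have hpos : 0 < esymmOn S m fun a => v a + T := esymmOn_pos hm fun a ha => by
    have := single_le_sum (fun b _ => abs_nonneg (v b)) ha
    linarith [neg_abs_le (v a)]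
  obtain ⟨t, ht, hzero⟩ := intermediate_value_Icc hT
    (continuous_esymmOn_add_const S m v).continuousOn ⟨by simpa using hv, hpos.le⟩
  exact ⟨t, ht.1, hzero⟩

variable [DecidableEq ι]

theorem hasDerivAt_esymmOn_add_const (S : Finset ι) (j : ℕ) (v : ι → ℝ) (t : ℝ) :
    HasDerivAt (fun s : ℝ => esymmOn S (j + 1) fun a => v a + s)
      ((S.card - j : ℕ) * esymmOn S j fun a => v a + t) t := by
  have hprod : ∀ A ∈ S.powersetCard (j + 1), HasDerivAt (fun s : ℝ => ∏ a ∈ A, (v a + s))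
      (∑ a ∈ A, ∏ x ∈ A.erase a, (v x + t)) t := fun A _ => by
    simpa using HasDerivAt.fun_finsetProd (u := A) (f' := fun _ => (1 : ℝ))
      fun a _ => (hasDerivAt_id t).const_add (v a)
  refine (HasDerivAt.fun_sum hprod).congr_deriv ?_
  rw [sum_powersetCard_succ_sum_erase S j fun _ A => ∏ x ∈ A, (v x + t), esymmOn, mul_sum]
  refine sum_congr rfl fun A hA => ?_
  rw [mem_powersetCard] at hA
  rw [sum_const, card_sdiff_of_subset hA.1, hA.2, nsmul_eq_mul]

theorem esymmOn_add_const_pos {m : ℕ} (hm : m ≤ S.card) (hv : ∀ j ≤ m, 0 ≤ esymmOn S j v)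
    {t : ℝ} (ht : 0 < t) : 0 < esymmOn S m fun a => v a + t := by
  induction m generalizing t with
  | zero => simp
  | succ m ih =>
    have hmono : StrictMonoOn (fun s : ℝ => esymmOn S (m + 1) fun a => v a + s) (Set.Ici 0) := by
      refine strictMonoOn_of_deriv_pos (convex_Ici 0)
        (continuous_esymmOn_add_const S (m + 1) v).continuousOn fun x hx => ?_
      rw [interior_Ici] at hx
      rw [(hasDerivAt_esymmOn_add_const S m v x).deriv]
      have hcard : (0 : ℝ) < (S.card - m : ℕ) := by exact_mod_cast Nat.sub_pos_of_lt hm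
      exact mul_pos hcard (ih (by omega) (fun j hj => hv j (by omega)) hx)
    have h0 := hmono Set.self_mem_Ici (Set.mem_Ici.2 ht.le) ht
    simp only [add_zero] at h0
    exact (hv (m + 1) le_rfl).trans_lt h0

theorem add_const_mem_gardingConeOn (hk : k ≤ S.card) (hv : ∀ j ≤ k, 0 ≤ esymmOn S j v)
    {t : ℝ} (ht : 0 < t) : (fun a => v a + t) ∈ gardingConeOn S k :=
  fun _ _ hj => esymmOn_add_const_pos (hj.trans hk) (fun i hi => hv i (hi.trans hj)) ht

theorem add_const_mem_gardingConeOn_of_nonneg (hv : v ∈ gardingConeOn S k) {t : ℝ}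
    (ht : 0 ≤ t) : (fun a => v a + t) ∈ gardingConeOn S k := by
  rcases ht.eq_or_lt with rfl | ht
  · simpa using hv
  rcases k with _ | k
  · exact fun _ hj hj0 => absurd hj0 (by omega)
  exact add_const_mem_gardingConeOn (card_le_of_esymmOn_ne_zero (hv (k + 1) (by omega) le_rfl).ne')
    (fun j hj => esymmOn_nonneg_of_mem_gardingConeOn hv hj) ht

end Cone

theorem esymmOn_erase_pos {ι : Type*} [DecidableEq ι] (k : ℕ) {S : Finset ι} {v : ι → ℝ} {i : ι}
    (hi : i ∈ S) (hv : v ∈ gardingConeOn S (k + 1)) : 0 < esymmOn (S.erase i) k v := by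
  induction k using Nat.strong_induction_on generalizing S v i with
  | _ k ih =>
    rcases k with _ | k
    · simp
    have hcard : k + 1 ≤ (S.erase i).card := by
      have := card_le_of_esymmOn_ne_zero (hv (k + 2) (by omega) le_rfl).ne'
      rw [card_erase_of_mem hi]
      omega
    have boundary : ∀ w ∈ gardingConeOn S (k + 2), esymmOn (S.erase i) (k + 1) w ≠ 0 := by
      intro w hw h0
      have hclosure : ∀ j ≤ k + 1, 0 ≤ esymmOn (S.erase i) j w := fun j hj => by
        rcases hj.lt_or_eq with hj | rfl
        · exact (ih j (by omega) hi (gardingConeOn_mono (by omega) hw)).le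
        · exact h0.ge
      have hnn : ∀ a ∈ S.erase i, 0 ≤ esymmOn ((S.erase i).erase a) k w := fun a ha =>
        esymmOn_nonneg_of_add_const_pos fun ε hε =>
          ih k (by omega) ha (add_const_mem_gardingConeOn hcard hclosure hε)
      have hS : esymmOn S (k + 2) w = esymmOn (S.erase i) (k + 2) w := by
        rw [esymmOn_succ_of_mem hi, h0, mul_zero, zero_add]
      exact (hw (k + 2) (by omega) le_rfl).not_ge (hS ▸ esymmOn_add_two_nonpos h0 hnn)
    by_contra! hneg
    obtain ⟨t, ht, hzero⟩ := exists_esymmOn_add_const_eq_zero hcard hneg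
    exact boundary _ (add_const_mem_gardingConeOn_of_nonneg hv ht) hzero

theorem esymm_deriv_pos_general (n k : ℕ)
    (κ : Fin n → ℝ) (hκ : κ ∈ GardingCone n k) (i : Fin n) :
    0 < esymmS n (k - 1) (Function.update κ i 0) := by
  rcases k with _ | k
  · simp [esymmS]
  · rw [esymmS, ← esymmOn, esymmOn_update_zero (mem_univ i)]
    exact esymmOn_erase_pos k (mem_univ i) hκ

/-- For `κ ∈ K_k`, the first derivatives of `S_k` are positive: `S_{k-1}(κ|i) > 0`. -/
theorem esymm_deriv_pos (n k : ℕ) (hk1 : 1 ≤ k) (hkn : k ≤ n)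
    (κ : Fin n → ℝ) (hκ : κ ∈ GardingCone n k) (i : Fin n) :
    0 < esymmS n (k - 1) (Function.update κ i 0) :=
  esymm_deriv_pos_general n k κ hκ i
end

section
/- For 1 ≤ k ≤ n and κ ∈ K_k, the truncated vector property holds: for each index i, the vector κ with its i-th coordinate removed (viewed in ℝ^{n−1}) lies in the (k−1)-th Gårding cone of ℝ^{n−1}, i.e., S_j(κ|i) > 0 for all 1 ≤ j ≤ k−1. -/
/-!
Write `P = (X + κ i) * Q` with `Q = ∏_{l ≠ i} (X + κ l)`; then `S_j(κ)` is the coefficient of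
`X^(n-j)` in `P` and `S_j(κ|i)` that of `X^(n-1-j)` in `Q`. Since the coefficients of `P` of
degree `≥ n - k` are positive, so are the values of `P⁽ᵐ⁾` on `[0, ∞)` for `m ≥ n - k`.
Descending from `m = n - 1`, `Q⁽ᵐ⁾` has no root `r ≥ 0`: Leibniz' rule would give
`P⁽ᵐ⁾(r) = m Q⁽ᵐ⁻¹⁾(r) > 0`, while `Q⁽ᵐ⁺¹⁾(r) > 0` because `Q⁽ᵐ⁺¹⁾` is real-rooted (Rolle), has
positive leading coefficient and, by the previous step, only negative roots; and
`Q⁽ᵐ⁻¹⁾(r) Q⁽ᵐ⁺¹⁾(r) > 0 = Q⁽ᵐ⁾(r)²` contradicts Laguerre's inequality `f f'' ≤ f'²` for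
real-rooted `f`. Hence `m! · Q.coeff m = Q⁽ᵐ⁾(0) > 0`.
-/

open Finset Polynomial

namespace Polynomial

section OrderedRing

variable {R : Type*} [CommRing R] [LinearOrder R] [IsStrictOrderedRing R]

theorem Splits.eval_mul_eval_derivative_derivative_le_sq {p : R[X]} (hp : p.Splits) (x : R) :
    p.eval x * (derivative (derivative p)).eval x ≤ (derivative p).eval x ^ 2 := by
  induction hp using Submonoid.closure_induction with
  | mem f hf =>
    obtain ⟨a, rfl⟩ | ⟨a, rfl⟩ := hf <;> simp
  | one => simp
  | mul f g _ _ hf hg =>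
    simp only [derivative_mul, derivative_add, eval_add, eval_mul]
    nlinarith [mul_nonneg (sq_nonneg (g.eval x)) (sub_nonneg.2 hf),
      mul_nonneg (sq_nonneg (f.eval x)) (sub_nonneg.2 hg)]

theorem eval_pos_of_coeff_nonneg {p : R[X]} (hp : ∀ i, 0 ≤ p.coeff i) (h0 : 0 < p.coeff 0)
    {x : R} (hx : 0 ≤ x) : 0 < p.eval x := by
  rw [eval_eq_sum_range]
  exact sum_pos' (fun i _ => mul_nonneg (hp i) (pow_nonneg hx i))
    ⟨0, by simp, by simpa using h0⟩

theorem eval_iterate_derivative_pos {p : R[X]} {m : ℕ} (hp : ∀ i, m ≤ i → 0 ≤ p.coeff i)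
    (hm : 0 < p.coeff m) {x : R} (hx : 0 ≤ x) : 0 < (derivative^[m] p).eval x := by
  refine eval_pos_of_coeff_nonneg (fun i => ?_) ?_ hx
  · rw [coeff_iterate_derivative]
    exact nsmul_nonneg (hp _ (by omega)) _
  · rw [coeff_iterate_derivative, zero_add, Nat.descFactorial_self]
    exact nsmul_pos hm (Nat.factorial_ne_zero m)

theorem leadingCoeff_iterate_derivative_pos {p : R[X]} (hp : 0 < p.leadingCoeff) {m : ℕ}
    (hm : m ≤ p.natDegree) : 0 < (derivative^[m] p).leadingCoeff := by
  have hcoeff : 0 < (derivative^[m] p).coeff (p.natDegree - m) := by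
    rw [coeff_iterate_derivative, Nat.sub_add_cancel hm]
    exact nsmul_pos hp (Nat.descFactorial_pos.2 hm).ne'
  have hdeg : (derivative^[m] p).natDegree = p.natDegree - m :=
    (natDegree_iterate_derivative p m).antisymm (le_natDegree_of_ne_zero hcoeff.ne')
  rwa [leadingCoeff, hdeg]

theorem Splits.eval_pos_of_forall_roots_lt {p : R[X]} (hp : p.Splits) (hlc : 0 < p.leadingCoeff)
    {x : R} (hx : ∀ r ∈ p.roots, r < x) : 0 < p.eval x := by
  rw [hp.eval_eq_prod_roots]
  refine mul_pos hlc (Multiset.prod_pos fun y hy => ?_)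
  obtain ⟨r, hr, rfl⟩ := Multiset.mem_map.1 hy
  exact sub_pos.2 (hx r hr)

end OrderedRing

theorem iterate_derivative_X_add_C_mul {R : Type*} [CommSemiring R] (a : R) (q : R[X]) (n : ℕ) :
    derivative^[n] ((X + C a) * q) = (X + C a) * derivative^[n] q + n • derivative^[n - 1] q := by
  rw [add_mul, iterate_map_add, mul_comm X, iterate_derivative_mul_X, iterate_derivative_C_mul]
  ring

theorem Splits.derivative {p : ℝ[X]} (hp : p.Splits) : p.derivative.Splits := by
  rw [splits_iff_card_roots] at hp ⊢
  have := card_roots_le_derivative p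
  have := card_roots' p.derivative
  have := natDegree_derivative_le p
  by_cases h0 : p.natDegree = 0
  · simp [derivative_of_natDegree_zero h0]
  · omega

theorem Splits.iterate_derivative {p : ℝ[X]} (hp : p.Splits) (m : ℕ) :
    (Polynomial.derivative^[m] p).Splits := by
  induction m with
  | zero => exact hp
  | succ m ih => rw [Function.iterate_succ_apply']; exact ih.derivative

theorem roots_iterate_derivative_neg {Q : ℝ[X]} (hQ : Q.Splits) (hlc : 0 < Q.leadingCoeff)
    {a : ℝ} {m₀ : ℕ}
    (hP : ∀ m, m₀ ≤ m → m ≤ Q.natDegree → ∀ t, 0 ≤ t →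
      0 < (derivative^[m] ((X + C a) * Q)).eval t)
    {m : ℕ} (hm : m ≤ Q.natDegree) (hm₀ : m₀ ≤ m) : ∀ r ∈ (derivative^[m] Q).roots, r < 0 := by
  induction hm using Nat.decreasingInduction with
  | self =>
    intro r hr
    have := card_roots' (derivative^[Q.natDegree] Q)
    have := natDegree_iterate_derivative Q Q.natDegree
    have := Multiset.card_pos_iff_exists_mem.2 ⟨r, hr⟩
    omega
  | of_succ m hm ih =>
    intro r hr
    by_contra! hr0
    have hroot : (derivative^[m] Q).eval r = 0 := (mem_roots'.1 hr).2
    have hnext : 0 < (derivative^[m + 1] Q).eval r :=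
      (hQ.iterate_derivative _).eval_pos_of_forall_roots_lt
        (leadingCoeff_iterate_derivative_pos hlc hm)
        fun s hs => (ih (by omega) s hs).trans_le hr0
    have hprev := hP m hm₀ hm.le r hr0
    rw [iterate_derivative_X_add_C_mul] at hprev
    simp only [eval_add, eval_mul, hroot, mul_zero, zero_add, nsmul_eq_mul, eval_natCast] at hprev
    cases m with
    | zero => simp at hprev
    | succ m =>
      have hlaguerre := (hQ.iterate_derivative m).eval_mul_eval_derivative_derivative_le_sq r
      simp only [← Function.iterate_succ_apply' derivative, hroot] at hlaguerre
      have : 0 < (derivative^[m] Q).eval r := pos_of_mul_pos_right hprev (by positivity)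
      nlinarith [mul_pos this hnext]

theorem coeff_pos_of_coeff_X_add_C_mul_pos {Q : ℝ[X]} (hQ : Q.Splits) (a : ℝ) {m₀ : ℕ}
    (hP : ∀ m, m₀ ≤ m → m ≤ Q.natDegree + 1 → 0 < ((X + C a) * Q).coeff m)
    {m : ℕ} (hm₀ : m₀ ≤ m) (hm : m ≤ Q.natDegree) : 0 < Q.coeff m := by
  have hlc : 0 < Q.leadingCoeff := by
    simpa [add_mul, coeff_X_mul, coeff_C_mul, coeff_eq_zero_of_natDegree_lt]
      using hP (Q.natDegree + 1) (by omega) le_rfl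
  have hPcoeff : ∀ i, m₀ ≤ i → 0 ≤ ((X + C a) * Q).coeff i := by
    intro i hi
    by_cases hiN : i ≤ Q.natDegree + 1
    · exact (hP i hi hiN).le
    · rw [coeff_eq_zero_of_natDegree_lt]
      have := natDegree_mul_le (p := X + C a) (q := Q)
      rw [natDegree_X_add_C] at this
      omega
  have hPpos : ∀ m, m₀ ≤ m → m ≤ Q.natDegree → ∀ t, 0 ≤ t →
      0 < (derivative^[m] ((X + C a) * Q)).eval t := fun m hm₀ hm t ht =>
    eval_iterate_derivative_pos (fun i hi => hPcoeff i (by omega)) (hP m hm₀ (by omega)) ht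
  have := (hQ.iterate_derivative m).eval_pos_of_forall_roots_lt
    (leadingCoeff_iterate_derivative_pos hlc hm)
    fun r hr => roots_iterate_derivative_neg hQ hlc hPpos hm hm₀ r hr
  rw [← coeff_zero_eq_eval_zero, coeff_iterate_derivative, zero_add, Nat.descFactorial_self] at this
  exact (nsmul_pos_iff (Nat.factorial_ne_zero m)).1 this

end Polynomial

theorem esymmS_eq_coeff_prod {n j : ℕ} (κ : Fin n → ℝ) (hj : j ≤ n) :
    esymmS n j κ = (∏ l, (X + C (κ l))).coeff (n - j) := by
  rw [Finset.prod_X_add_C_coeff _ _ (by simp)]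
  simp [esymmS, Nat.sub_sub_self hj]

theorem esymmS_update_zero_eq_coeff {n j : ℕ} (κ : Fin n → ℝ) (i : Fin n) (hj : j < n) :
    esymmS n j (Function.update κ i 0) =
      (∏ l ∈ univ.erase i, (X + C (κ l))).coeff (n - 1 - j) := by
  rw [esymmS_eq_coeff_prod _ hj.le, ← mul_prod_erase _ _ (mem_univ i), Function.update_self,
    C_0, add_zero, show n - j = n - 1 - j + 1 by omega, coeff_X_mul]
  congr 1
  exact prod_congr rfl fun l hl => by rw [Function.update_of_ne (ne_of_mem_erase hl)]

theorem truncated_in_lower_cone_general (n k : ℕ) (hkn : k ≤ n)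
    (κ : Fin n → ℝ) (hκ : κ ∈ GardingCone n k) (i : Fin n) :
    ∀ j : ℕ, 1 ≤ j → j ≤ k - 1 → 0 < esymmS n j (Function.update κ i 0) := by
  intro j _ hjk
  set Q := ∏ l ∈ univ.erase i, (X + C (κ l))
  have hQdeg : Q.natDegree = n - 1 := by
    rw [natDegree_prod_of_monic _ _ fun l _ => monic_X_add_C (κ l)]
    simp
  rw [esymmS_update_zero_eq_coeff κ i (by omega)]
  refine coeff_pos_of_coeff_X_add_C_mul_pos (Splits.prod fun l _ => Splits.X_add_C (κ l)) (κ i)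
    (m₀ := n - k) (fun m hm hmn => ?_) (by omega) (by rw [hQdeg]; omega)
  rw [hQdeg] at hmn
  rw [mul_prod_erase _ (fun l => X + C (κ l)) (mem_univ i), ← Nat.sub_sub_self (by omega : m ≤ n),
    ← esymmS_eq_coeff_prod κ (Nat.sub_le n m)]
  rcases (n - m).eq_zero_or_pos with h | h
  · simp [h, esymmS]
  · exact hκ _ h (by omega)

/-- For `κ ∈ K_k`, the truncated vector `(κ|i)` lies in the `(k-1)`-th Gårding cone:
`S_j(κ|i) > 0` for all `1 ≤ j ≤ k-1`. -/
theorem truncated_in_lower_cone (n k : ℕ) (hk1 : 1 ≤ k) (hkn : k ≤ n)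
    (κ : Fin n → ℝ) (hκ : κ ∈ GardingCone n k) (i : Fin n) :
    ∀ j : ℕ, 1 ≤ j → j ≤ k - 1 → 0 < esymmS n j (Function.update κ i 0) :=
  truncated_in_lower_cone_general n k hkn κ hκ i
end

section
/- Let A be an n×n real symmetric matrix with eigenvalues λ(A), and define F(A) = S_k(λ(A)) as a polynomial in the matrix entries. If A is diagonal with diagonal entries λ = (λ_1,…,λ_n), then the first derivatives satisfy F^{ij}(A) = S_{k-1}(λ|i)·δ_{ij}. -/
open Finset

/-- `F(A) = S_k(λ(A))`, realized as the sum of all principal `k×k` minors of `A`,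
a polynomial in the entries of `A`. -/
noncomputable def Fop (n k : ℕ) (A : Matrix (Fin n) (Fin n) ℝ) : ℝ :=
  ∑ s ∈ Finset.powersetCard k (Finset.univ : Finset (Fin n)),
    (A.submatrix (fun x : {x // x ∈ s} => (x : Fin n))
      (fun x : {x // x ∈ s} => (x : Fin n))).det

/-- `F^{ij}(A) = ∂F/∂a_{ij}(A)`. -/
noncomputable def Fderiv1 (n k : ℕ) (A : Matrix (Fin n) (Fin n) ℝ) (i j : Fin n) : ℝ :=
  deriv (fun t : ℝ => Fop n k (A + t • Matrix.single i j 1)) 0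

/-!
Every principal minor of a triangular matrix is the product of its diagonal entries, so `F`
agrees with `S_k` of the diagonal on triangular matrices. For `i ≠ j` the line
`diagonal λ + t E_ij` consists of triangular matrices with diagonal `λ`, so `F` is constant on it.
For `i = j` it is `diagonal` of `λ` with `λ_i` shifted by `t`, and `S_k` is affine in `λ_i` with
slope `S_{k-1}(λ|i)`, by the recurrence `S_{k+1}(s ∪ {i}) = S_{k+1}(s) + λ_i S_k(s)`.
-/

open Matrix

theorem sum_powersetCard_succ_insert_prod {ι R : Type*} [DecidableEq ι] [CommSemiring R]
    {i : ι} {s : Finset ι} (hi : i ∉ s) (k : ℕ) (g : ι → R) :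
    ∑ u ∈ powersetCard (k + 1) (insert i s), ∏ j ∈ u, g j =
      ∑ u ∈ powersetCard (k + 1) s, ∏ j ∈ u, g j + g i * ∑ u ∈ powersetCard k s, ∏ j ∈ u, g j := by
  have hiu : ∀ u ∈ powersetCard k s, i ∉ u := fun u hu hiu => hi ((mem_powersetCard.1 hu).1 hiu)
  have hdisj : Disjoint (powersetCard (k + 1) s) ((powersetCard k s).image (insert i)) := by
    refine disjoint_left.2 fun u hu hu' => hi ?_
    obtain ⟨v, -, rfl⟩ := mem_image.1 hu'
    exact (mem_powersetCard.1 hu).1 (mem_insert_self i v)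
  rw [powersetCard_succ_insert hi, sum_union hdisj,
    sum_image fun u hu v hv h => by rw [← erase_insert (hiu u hu), h, erase_insert (hiu v hv)],
    mul_sum]
  exact congrArg _ (sum_congr rfl fun u hu => prod_insert (hiu u hu))

section esymmS

variable {n : ℕ} (lam : Fin n → ℝ) (i : Fin n)

theorem esymmS_succ_update (x : ℝ) (k : ℕ) :
    esymmS n (k + 1) (Function.update lam i x) =
      ∑ u ∈ powersetCard (k + 1) (univ.erase i), ∏ j ∈ u, lam j +
        x * ∑ u ∈ powersetCard k (univ.erase i), ∏ j ∈ u, lam j := by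
  have hi : i ∉ univ.erase i := notMem_erase i univ
  have hoff : ∀ m, ∀ u ∈ powersetCard m (univ.erase i), ∏ j ∈ u, Function.update lam i x j =
      ∏ j ∈ u, lam j := fun m u hu =>
    prod_update_of_notMem (fun hiu => hi ((mem_powersetCard.1 hu).1 hiu)) lam x
  conv_lhs => rw [esymmS, ← insert_erase (mem_univ i)]
  rw [sum_powersetCard_succ_insert_prod hi, Function.update_self, sum_congr rfl (hoff _),
    sum_congr rfl (hoff _)]

theorem esymmS_update_zero (k : ℕ) :
    esymmS n k (Function.update lam i 0) = ∑ u ∈ powersetCard k (univ.erase i), ∏ j ∈ u, lam j := by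
  cases k with
  | zero => simp [esymmS]
  | succ k => rw [esymmS_succ_update, zero_mul, add_zero]

theorem hasDerivAt_esymmS_update (k : ℕ) (x : ℝ) :
    HasDerivAt (fun y => esymmS n (k + 1) (Function.update lam i y))
      (esymmS n k (Function.update lam i 0)) x := by
  simp only [esymmS_succ_update, esymmS_update_zero]
  exact (hasDerivAt_mul_const _).const_add _

end esymmS

section Fop

variable {n : ℕ} (k : ℕ)

theorem Fop_of_isUpperTriangular {M : Matrix (Fin n) (Fin n) ℝ} (hM : M.IsUpperTriangular) :
    Fop n k M = esymmS n k M.diag := by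
  refine sum_congr rfl fun s _ => ?_
  rw [det_of_isUpperTriangular (hM.submatrix (f := ((↑) : s → Fin n)))]
  exact prod_coe_sort s M.diag

theorem Fop_transpose (M : Matrix (Fin n) (Fin n) ℝ) : Fop n k Mᵀ = Fop n k M :=
  sum_congr rfl fun s _ => by rw [← transpose_submatrix, det_transpose]

theorem Fop_of_isLowerTriangular {M : Matrix (Fin n) (Fin n) ℝ} (hM : M.IsLowerTriangular) :
    Fop n k M = esymmS n k M.diag := by
  rw [← Fop_transpose, Fop_of_isUpperTriangular k hM.transpose, diag_transpose]

theorem Fop_diagonal (d : Fin n → ℝ) : Fop n k (diagonal d) = esymmS n k d := by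
  simpa using Fop_of_isUpperTriangular k (blockTriangular_diagonal d)

theorem Fop_diagonal_add_smul_single_of_ne (lam : Fin n → ℝ) {i j : Fin n} (hij : i ≠ j)
    (t : ℝ) : Fop n k (diagonal lam + t • single i j 1) = esymmS n k lam := by
  have hdiag : (diagonal lam + single i j t).diag = lam := by
    rw [diag_add, diag_diagonal, diag_single_of_ne _ _ _ hij, add_zero]
  rw [smul_single, smul_eq_mul, mul_one]
  conv_rhs => rw [← hdiag]
  rcases hij.lt_or_gt with h | h
  · exact Fop_of_isUpperTriangular k
      ((blockTriangular_diagonal lam).add (blockTriangular_single (b := id) h.le t))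
  · exact Fop_of_isLowerTriangular k
      ((blockTriangular_diagonal lam).add (blockTriangular_single' (b := id) h.le t))

end Fop

theorem diagonal_add_smul_single_self {n : ℕ} (lam : Fin n → ℝ) (i : Fin n) (t : ℝ) :
    diagonal lam + t • single i i 1 = diagonal (Function.update lam i (lam i + t)) := by
  rw [← diagonal_single, ← diagonal_smul, diagonal_add]
  congr 1
  ext m
  rcases eq_or_ne m i with rfl | hm <;> simp [*]

theorem fderiv_esymm_diagonal_general (n k : ℕ) (hk1 : 1 ≤ k)
    (lam : Fin n → ℝ) (i j : Fin n) :
    Fderiv1 n k (Matrix.diagonal lam) i j =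
      esymmS n (k - 1) (Function.update lam i 0) * (if i = j then 1 else 0) := by
  obtain ⟨k, rfl⟩ := Nat.exists_eq_add_of_le' hk1
  rcases eq_or_ne i j with rfl | hij
  · rw [Fderiv1, if_pos rfl, mul_one, Nat.add_sub_cancel]
    simp only [diagonal_add_smul_single_self, Fop_diagonal]
    exact ((hasDerivAt_esymmS_update lam i k _).comp_const_add (lam i) 0).deriv
  · rw [Fderiv1, if_neg hij, mul_zero]
    simp only [Fop_diagonal_add_smul_single_of_ne _ lam hij]
    exact deriv_const _ _

/-- At a diagonal matrix `A` with diagonal `λ`, `F^{ij}(A) = S_{k-1}(λ|i) δ_{ij}`. -/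
theorem fderiv_esymm_diagonal (n k : ℕ) (hk1 : 1 ≤ k) (hkn : k ≤ n)
    (lam : Fin n → ℝ) (i j : Fin n) :
    Fderiv1 n k (Matrix.diagonal lam) i j =
      esymmS n (k - 1) (Function.update lam i 0) * (if i = j then 1 else 0) :=
  fderiv_esymm_diagonal_general n k hk1 lam i j
end

section
/- The second derivatives of F(A) = S_k(λ(A)) at a diagonal matrix A with diagonal λ are: F^{ii,pp} = S_{k-2}(λ|ip) for i ≠ p, F^{ip,pi} = −S_{k-2}(λ|ip) for i ≠ p, and all other second derivatives F^{ij,pq} vanish (in particular F^{ii,ii} = 0). -/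
open Finset

/-- `F^{ij,pq}(A) = ∂²F/∂a_{ij}∂a_{pq}(A)`. -/
noncomputable def Fderiv2 (n k : ℕ) (A : Matrix (Fin n) (Fin n) ℝ)
    (i j p q : Fin n) : ℝ :=
  deriv (fun s : ℝ =>
    deriv (fun t : ℝ =>
      Fop n k (A + s • Matrix.single p q 1 + t • Matrix.single i j 1)) 0) 0

/-!
A principal minor `det A_S` is affine in each matrix entry, the determinant being linear in each
row, so at `A = diag λ` the derivative `F^{ij,pq}` is the coefficient of `s t` in
`∑_S det (A + s E_pq + t E_ij)_S`. If `i = p` both perturbations lie in one row and there is no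
`s t` term. If `i ≠ p` the coefficient is the determinant of `A_S` with rows `p, i` replaced by
`e_q, e_j`: this is `∏_{S \ {i,p}} λ` when `(j, q) = (i, p)`, its negative when `(j, q) = (p, i)`
(a row swap), and `0` otherwise (a zero column). Summing over the `k`-sets `S ⊇ {i, p}` gives
`S_{k-2}(λ|ip)`.
-/

open Matrix

def HasMixedCoeff (f : ℝ → ℝ → ℝ) (m : ℝ) : Prop :=
  ∃ a b c : ℝ, ∀ s t, f s t = a + b * s + c * t + m * (s * t)

namespace HasMixedCoeff

variable {f : ℝ → ℝ → ℝ} {m : ℝ}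

theorem deriv_deriv (h : HasMixedCoeff f m) :
    deriv (fun s => deriv (fun t => f s t) 0) 0 = m := by
  obtain ⟨a, b, c, hf⟩ := h
  have deriv_affine (α β : ℝ) : deriv (fun t : ℝ => α + β * t) 0 = β := by simp
  have inner (s : ℝ) : deriv (fun t => f s t) 0 = c + m * s :=
    calc deriv (fun t => f s t) 0 = deriv (fun t => (a + b * s) + (c + m * s) * t) 0 := by
          congr 1; ext t; rw [hf]; ring
      _ = c + m * s := deriv_affine _ _
  simp_rw [inner, deriv_affine]

theorem comp_mul (h : HasMixedCoeff f m) (u v : ℝ) :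
    HasMixedCoeff (fun s t => f (s * u) (t * v)) (m * u * v) := by
  obtain ⟨a, b, c, hf⟩ := h
  exact ⟨a, b * u, c * v, fun s t => by simp only [hf]; ring⟩

theorem sum {ι : Type*} (S : Finset ι) {f : ι → ℝ → ℝ → ℝ} {m : ι → ℝ}
    (h : ∀ x ∈ S, HasMixedCoeff (f x) (m x)) :
    HasMixedCoeff (fun s t => ∑ x ∈ S, f x s t) (∑ x ∈ S, m x) := by
  choose! a b c hf using h
  refine ⟨∑ x ∈ S, a x, ∑ x ∈ S, b x, ∑ x ∈ S, c x, fun s t => ?_⟩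
  simp only [sum_mul, ← sum_add_distrib]
  exact sum_congr rfl fun x hx => hf x hx s t

end HasMixedCoeff

section RowExpansion

variable {ι R : Type*} [DecidableEq ι]

theorem add_smul_single_eq_updateRow [Semiring R] (A : Matrix ι ι R) (p q : ι) (s : R) :
    A + s • single p q 1 = A.updateRow p (A p + s • Pi.single q 1) := by
  ext x y
  rcases eq_or_ne x p with rfl | hx
  · simp [single_apply, Pi.single_apply, eq_comm]
  · simp [updateRow_ne hx, Ne.symm hx]

theorem prod_update_one_update_one [Fintype ι] [CommMonoid R] (d : ι → R) {i p : ι}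
    (hip : i ≠ p) :
    ∏ x, Function.update (Function.update d p 1) i 1 x = ∏ x ∈ {i, p}ᶜ, d x := by
  rw [← prod_compl_mul_prod {i, p}, prod_pair hip, Function.update_self,
    Function.update_of_ne hip.symm, Function.update_self, mul_one, mul_one]
  refine prod_congr rfl fun x hx => ?_
  simp only [mem_compl, mem_insert, mem_singleton, not_or] at hx
  rw [Function.update_of_ne hx.1, Function.update_of_ne hx.2]

variable [Fintype ι] [CommRing R]

theorem det_updateRow_add_smul_updateRow_add_smul (A : Matrix ι ι R) {i p : ι} (hip : i ≠ p)
    (x y : ι → R) (s t : R) :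
    ((A.updateRow p (A p + s • x)).updateRow i (A i + t • y)).det =
      A.det + s * (A.updateRow p x).det + t * (A.updateRow i y).det +
        s * t * ((A.updateRow p x).updateRow i y).det := by
  have row_i : (A.updateRow p (A p + s • x)) i = A i := updateRow_ne hip
  have row_p : (A.updateRow i y) p = A p := updateRow_ne hip.symm
  rw [det_updateRow_add, det_updateRow_smul, ← row_i, updateRow_eq_self,
    updateRow_comm _ hip.symm, det_updateRow_add, det_updateRow_add, det_updateRow_smul,
    det_updateRow_smul, updateRow_eq_self, ← row_p, updateRow_eq_self, updateRow_comm _ hip]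
  ring

theorem det_diagonal_updateRow_single_updateRow_single (d : ι → R) {i p : ι} (hip : i ≠ p)
    (j q : ι) :
    (((diagonal d).updateRow p (Pi.single q 1)).updateRow i (Pi.single j 1)).det =
      if i = j ∧ p = q then ∏ x ∈ {i, p}ᶜ, d x
      else if i = q ∧ j = p then -∏ x ∈ {i, p}ᶜ, d x else 0 := by
  have unit_rows : (((diagonal d).updateRow p (Pi.single p 1)).updateRow i (Pi.single i 1)).det =
      ∏ x ∈ {i, p}ᶜ, d x := by
    rw [diagonal_updateRow_single, diagonal_updateRow_single, det_diagonal,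
      prod_update_one_update_one d hip]
  split_ifs with h_same h_swap
  · obtain ⟨rfl, rfl⟩ := h_same
    exact unit_rows
  · obtain ⟨hq, hj⟩ := h_swap
    subst q j
    have swap_rows : ((diagonal d).updateRow p (Pi.single i 1)).updateRow i (Pi.single p 1) =
        (((diagonal d).updateRow p (Pi.single p 1)).updateRow i (Pi.single i 1)).submatrix
          (Equiv.swap i p) id := by
      ext x y
      rcases eq_or_ne x i with rfl | hxi
      · simp [updateRow_ne hip.symm]
      rcases eq_or_ne x p with rfl | hxp
      · simp [updateRow_ne hxi]
      simp [hxi, hxp, Equiv.swap_apply_of_ne_of_ne hxi hxp]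
    rw [swap_rows, det_permute, Equiv.Perm.sign_swap hip, unit_rows]
    simp
  · obtain ⟨c, hc, hjc, hqc⟩ : ∃ c, (c = i ∨ c = p) ∧ j ≠ c ∧ q ≠ c := by
      by_contra! h
      have hi := h i (Or.inl rfl)
      have hp := h p (Or.inr rfl)
      grind
    refine det_eq_zero_of_column_eq_zero c fun x => ?_
    rcases eq_or_ne x i with rfl | hxi
    · simp [hjc]
    rcases eq_or_ne x p with rfl | hxp
    · simp [updateRow_ne hxi, hqc]
    have hxc : x ≠ c := by rcases hc with rfl | rfl <;> assumption
    simp [updateRow_ne hxi, updateRow_ne hxp, hxc]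

end RowExpansion

section MixedCoeff

variable {ι : Type*} [Fintype ι] [DecidableEq ι]

theorem hasMixedCoeff_det_add_smul_single_add_smul_single (A : Matrix ι ι ℝ) (p q i j : ι) :
    HasMixedCoeff (fun s t => (A + s • single p q 1 + t • single i j 1).det)
      (if i = p then 0 else ((A.updateRow p (Pi.single q 1)).updateRow i (Pi.single j 1)).det) := by
  split_ifs with hip
  · subst hip
    refine ⟨A.det, (A.updateRow i (Pi.single q 1)).det, (A.updateRow i (Pi.single j 1)).det,
      fun s t => ?_⟩
    dsimp only
    rw [add_smul_single_eq_updateRow, add_smul_single_eq_updateRow, updateRow_self, updateRow_idem,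
      det_updateRow_add, det_updateRow_add, det_updateRow_smul, det_updateRow_smul,
      updateRow_eq_self]
    ring
  · refine ⟨A.det, (A.updateRow p (Pi.single q 1)).det, (A.updateRow i (Pi.single j 1)).det,
      fun s t => ?_⟩
    dsimp only
    rw [add_smul_single_eq_updateRow, add_smul_single_eq_updateRow, updateRow_ne hip,
      det_updateRow_add_smul_updateRow_add_smul A hip]
    ring

theorem hasMixedCoeff_det_diagonal_add_smul_single_add_smul_single (d : ι → ℝ) (p q i j : ι) :
    HasMixedCoeff (fun s t => (diagonal d + s • single p q 1 + t • single i j 1).det)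
      (if i = j ∧ p = q ∧ i ≠ p then ∏ x ∈ {i, p}ᶜ, d x
      else if i = q ∧ j = p ∧ i ≠ p then -∏ x ∈ {i, p}ᶜ, d x else 0) := by
  convert hasMixedCoeff_det_add_smul_single_add_smul_single (diagonal d) p q i j using 1
  by_cases hip : i = p
  · simp [hip]
  · rw [if_neg hip, det_diagonal_updateRow_single_updateRow_single d hip]
    simp [hip]

end MixedCoeff

section PrincipalMinor

variable {ι R : Type*} [DecidableEq ι]

/-- Lets the principal minor of `A` on `S` be computed as a determinant over all of `ι`. -/
def padWithOne [Zero R] [One R] (S : Finset ι) (A : Matrix ι ι R) : Matrix ι ι R :=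
  of fun x y => if x ∈ S ∧ y ∈ S then A x y else (1 : Matrix ι ι R) x y

theorem padWithOne_diagonal_add_smul_single_add_smul_single [CommRing R] (S : Finset ι)
    (d : ι → R) (p q i j : ι) (s t : R) :
    padWithOne S (diagonal d + s • single p q 1 + t • single i j 1) =
      diagonal (S.piecewise d 1) + (s * if p ∈ S ∧ q ∈ S then 1 else 0) • single p q 1 +
        (t * if i ∈ S ∧ j ∈ S then 1 else 0) • single i j 1 := by
  ext x y
  simp only [padWithOne, of_apply, Matrix.add_apply, Matrix.smul_apply, diagonal_apply,
    single_apply, one_apply, Finset.piecewise, Pi.one_apply, smul_eq_mul]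
  split_ifs <;> grind

variable [Fintype ι]

theorem prod_compl_pair_piecewise_one [CommMonoid R] (S : Finset ι) (d : ι → R) (i p : ι) :
    ∏ x ∈ {i, p}ᶜ, S.piecewise d 1 x = ∏ x ∈ S \ {i, p}, d x := by
  rw [prod_piecewise, inter_comm, ← sdiff_eq_inter_compl]
  simp

theorem det_submatrix_eq_det_padWithOne [CommRing R] (S : Finset ι) (A : Matrix ι ι R) :
    (A.submatrix (fun x : {x // x ∈ S} => (x : ι)) (fun x : {x // x ∈ S} => (x : ι))).det =
      (padWithOne S A).det := by
  have lower_left : ∀ x, x ∉ S → ∀ y, y ∈ S → padWithOne S A x y = 0 := by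
    intro x hx y hy
    have hxy : x ≠ y := by rintro rfl; exact hx hy
    simp [padWithOne, hx, one_apply, hxy]
  have block_S : toSquareBlockProp (padWithOne S A) (· ∈ S) =
      A.submatrix (fun x : {x // x ∈ S} => (x : ι)) (fun x : {x // x ∈ S} => (x : ι)) := by
    ext ⟨x, hx⟩ ⟨y, hy⟩
    simp [toSquareBlockProp, toBlock, padWithOne, hx, hy]
  have block_compl : toSquareBlockProp (padWithOne S A) (· ∉ S) = 1 := by
    ext ⟨x, hx⟩ ⟨y, hy⟩
    simp [toSquareBlockProp, toBlock, padWithOne, hx, one_apply]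
  rw [twoBlockTriangular_det _ (· ∈ S) lower_left, block_S, block_compl, det_one, mul_one]
  -- the block lemma puts a different `Fintype` instance on the subtype
  convert rfl

theorem hasMixedCoeff_det_submatrix_diagonal_add_smul_single_add_smul_single (S : Finset ι)
    (d : ι → ℝ) (p q i j : ι) :
    HasMixedCoeff (fun s t => ((diagonal d + s • single p q 1 + t • single i j 1).submatrix
        (fun x : {x // x ∈ S} => (x : ι)) (fun x : {x // x ∈ S} => (x : ι))).det)
      (if i = j ∧ p = q ∧ i ≠ p then (if {i, p} ⊆ S then ∏ x ∈ S \ {i, p}, d x else 0)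
      else if i = q ∧ j = p ∧ i ≠ p then -(if {i, p} ⊆ S then ∏ x ∈ S \ {i, p}, d x else 0)
      else 0) := by
  have padded := (hasMixedCoeff_det_diagonal_add_smul_single_add_smul_single
    (S.piecewise d 1) p q i j).comp_mul
      (if p ∈ S ∧ q ∈ S then 1 else 0) (if i ∈ S ∧ j ∈ S then 1 else 0)
  simp only [← padWithOne_diagonal_add_smul_single_add_smul_single] at padded
  simp only [det_submatrix_eq_det_padWithOne]
  convert padded using 1
  rw [prod_compl_pair_piecewise_one]
  split_ifs <;> grind

end PrincipalMinor

section PowersetCard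

variable {ι : Type*} [Fintype ι] [DecidableEq ι]

theorem sum_powersetCard_filter_superset {M : Type*} [AddCommMonoid M] {k : ℕ} (U : Finset ι)
    (hU : #U ≤ k) (f : Finset ι → M) :
    ∑ S ∈ powersetCard k univ with U ⊆ S, f (S \ U) = ∑ T ∈ powersetCard (k - #U) Uᶜ, f T := by
  have sdiff_cancel : ∀ T ∈ powersetCard (k - #U) Uᶜ, (T ∪ U) \ U = T := fun T hT =>
    union_sdiff_cancel_right
      (disjoint_of_subset_left (mem_powersetCard.1 hT).1 disjoint_compl_left)
  rw [filter_powersetCard_subset _ _ _ (subset_univ U) hU, ← compl_eq_univ_sdiff,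
    sum_image fun T hT T' hT' h => by rw [← sdiff_cancel T hT, h, sdiff_cancel T' hT']]
  exact sum_congr rfl fun T hT => by rw [sdiff_cancel T hT]

theorem sum_powersetCard_prod_eq_sum_powersetCard_compl {R : Type*} [CommSemiring R] (m : ℕ)
    (U : Finset ι) {d : ι → R} (hd : ∀ x ∈ U, d x = 0) :
    ∑ T ∈ powersetCard m univ, ∏ x ∈ T, d x = ∑ T ∈ powersetCard m Uᶜ, ∏ x ∈ T, d x := by
  refine (sum_subset (powersetCard_mono (subset_univ _)) fun T hT hTU => ?_).symm
  obtain ⟨x, hxT, hxU⟩ : ∃ x ∈ T, x ∈ U := by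
    simp_all [mem_powersetCard, subset_iff]
  exact prod_eq_zero hxT (hd x hxU)

end PowersetCard

theorem esymmS_update_update_zero (n : ℕ) {k : ℕ} (hk : 2 ≤ k) (d : Fin n → ℝ) {i p : Fin n}
    (hip : i ≠ p) :
    esymmS n (k - 2) (Function.update (Function.update d i 0) p 0) =
      ∑ S ∈ powersetCard k univ with {i, p} ⊆ S, ∏ x ∈ S \ {i, p}, d x := by
  have hcard : #({i, p} : Finset (Fin n)) = 2 := card_pair hip
  rw [esymmS, sum_powersetCard_prod_eq_sum_powersetCard_compl _ {i, p} (by simp [hip]),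
    sum_powersetCard_filter_superset {i, p} (hcard ▸ hk) fun T => ∏ x ∈ T, d x, hcard]
  refine sum_congr rfl fun T hT => prod_congr rfl fun x hx => ?_
  have hx' : x ∉ ({i, p} : Finset (Fin n)) := mem_compl.1 ((mem_powersetCard.1 hT).1 hx)
  simp only [mem_insert, mem_singleton, not_or] at hx'
  rw [Function.update_of_ne hx'.2, Function.update_of_ne hx'.1]

theorem hasMixedCoeff_Fop_diagonal_add_smul_single_add_smul_single (n k : ℕ) (d : Fin n → ℝ)
    (p q i j : Fin n) :
    HasMixedCoeff (fun s t => Fop n k (diagonal d + s • single p q 1 + t • single i j 1))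
      (if i = j ∧ p = q ∧ i ≠ p then
        ∑ S ∈ powersetCard k univ with {i, p} ⊆ S, ∏ x ∈ S \ {i, p}, d x
      else if i = q ∧ j = p ∧ i ≠ p then
        -∑ S ∈ powersetCard k univ with {i, p} ⊆ S, ∏ x ∈ S \ {i, p}, d x
      else 0) := by
  convert HasMixedCoeff.sum (powersetCard k univ) fun S _ =>
    hasMixedCoeff_det_submatrix_diagonal_add_smul_single_add_smul_single S d p q i j using 1
  · rfl
  · split_ifs <;> simp [sum_filter]

theorem fderiv2_esymm_diagonal_general (n k : ℕ) (hk2 : 2 ≤ k)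
    (lam : Fin n → ℝ) :
    (∀ i p : Fin n, i ≠ p →
        Fderiv2 n k (Matrix.diagonal lam) i i p p =
          esymmS n (k - 2) (Function.update (Function.update lam i 0) p 0)) ∧
      (∀ i p : Fin n, i ≠ p →
        Fderiv2 n k (Matrix.diagonal lam) i p p i =
          -esymmS n (k - 2) (Function.update (Function.update lam i 0) p 0)) ∧
      (∀ i j p q : Fin n, ¬(i = j ∧ p = q ∧ i ≠ p) → ¬(i = q ∧ j = p ∧ i ≠ p) →
        Fderiv2 n k (Matrix.diagonal lam) i j p q = 0) := by
  have fderiv2_eq (i j p q : Fin n) :=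
    (hasMixedCoeff_Fop_diagonal_add_smul_single_add_smul_single n k lam p q i j).deriv_deriv
  refine ⟨fun i p hip => ?_, fun i p hip => ?_, fun i j p q h_same h_swap => ?_⟩
  · rw [Fderiv2, fderiv2_eq, if_pos ⟨rfl, rfl, hip⟩, esymmS_update_update_zero n hk2 lam hip]
  · rw [Fderiv2, fderiv2_eq, if_neg fun h => hip h.2.1.symm, if_pos ⟨rfl, rfl, hip⟩,
      esymmS_update_update_zero n hk2 lam hip]
  · rw [Fderiv2, fderiv2_eq, if_neg h_same, if_neg h_swap]

/-- Second derivatives of `F(A) = S_k(λ(A))` at a diagonal matrix: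
`F^{ii,pp} = S_{k-2}(λ|ip)` and `F^{ip,pi} = −S_{k-2}(λ|ip)` for `i ≠ p`,
and all other second derivatives vanish (in particular `F^{ii,ii} = 0`). -/
theorem fderiv2_esymm_diagonal (n k : ℕ) (hk2 : 2 ≤ k) (hkn : k ≤ n)
    (lam : Fin n → ℝ) :
    (∀ i p : Fin n, i ≠ p →
        Fderiv2 n k (Matrix.diagonal lam) i i p p =
          esymmS n (k - 2) (Function.update (Function.update lam i 0) p 0)) ∧
      (∀ i p : Fin n, i ≠ p →
        Fderiv2 n k (Matrix.diagonal lam) i p p i =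
          -esymmS n (k - 2) (Function.update (Function.update lam i 0) p 0)) ∧
      (∀ i j p q : Fin n, ¬(i = j ∧ p = q ∧ i ≠ p) → ¬(i = q ∧ j = p ∧ i ≠ p) →
        Fderiv2 n k (Matrix.diagonal lam) i j p q = 0) :=
  fderiv2_esymm_diagonal_general n k hk2 lam
end
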